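/- Let Γ be a graph on vertex set X with adjacency matrix A, let {v_0, ..., v_{n−1}} be an orthonormal eigenbasis of A with v_0 the all-ones vector normalised, let P(k) be the eigenvalue of v_k with P(0) > 0, and let P_min = min_{k≠0} P(k) < 0. If Y ⊆ X is an independent set of Γ, then |Y|/|X| ≤ |P_min| / (P(0) + |P_min|). -/

import Mathlib

/-!
Expand the indicator vector `χ` of `Y` in the orthonormal eigenbasis, with coefficients
`c k = v k ⬝ᵥ χ`. Independence gives `0 = χ ⬝ᵥ A *ᵥ χ = ∑ k, P k * c k ^ 2`, Parseval gives
`∑ k, c k ^ 2 = |Y|`, and `c 0 ^ 2 = |Y|² / |X|` since `v 0` is constant. Bounding `P k ≥ Pmin`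
for `k ≠ 0` yields `P 0 * |Y|² / |X| + Pmin * (|Y| - |Y|² / |X|) ≤ 0`, which rearranges to the
ratio bound.
-/

open Matrix

section Orthonormal

variable {ι X : Type*} [Fintype ι] [Fintype X] [DecidableEq ι] {v : ι → X → ℝ}

theorem sum_mul_eq_ite_of_orthonormal [DecidableEq X] (hcard : Fintype.card X = Fintype.card ι)
    (horth : ∀ k l, v k ⬝ᵥ v l = if k = l then 1 else 0) (x y : X) :
    ∑ k, v k x * v k y = if x = y then 1 else 0 := by
  have hrows : Matrix.of v * (Matrix.of v)ᵀ = 1 := by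
    ext k l
    simpa [Matrix.mul_apply, Matrix.one_apply, dotProduct] using horth k l
  have hcols := (mul_eq_one_comm_of_card_eq _ _ _ hcard.symm).mp hrows
  simpa [Matrix.mul_apply, Matrix.one_apply] using congr_fun₂ hcols x y

theorem eq_sum_dotProduct_smul_of_orthonormal (hcard : Fintype.card X = Fintype.card ι)
    (horth : ∀ k l, v k ⬝ᵥ v l = if k = l then 1 else 0) (f : X → ℝ) :
    f = ∑ k, (v k ⬝ᵥ f) • v k := by
  classical
  ext x
  simp only [Finset.sum_apply, Pi.smul_apply, smul_eq_mul, dotProduct, Finset.sum_mul]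
  rw [Finset.sum_comm]
  simp_rw [mul_comm (v _ _) (f _), mul_assoc, ← Finset.mul_sum,
    sum_mul_eq_ite_of_orthonormal hcard horth]
  simp

theorem dotProduct_mulVec_eq_sum_mul_sq_of_orthonormal (hcard : Fintype.card X = Fintype.card ι)
    (horth : ∀ k l, v k ⬝ᵥ v l = if k = l then 1 else 0)
    {A : Matrix X X ℝ} {P : ι → ℝ} (heig : ∀ k, A *ᵥ v k = P k • v k) (f : X → ℝ) :
    f ⬝ᵥ A *ᵥ f = ∑ k, P k * (v k ⬝ᵥ f) ^ 2 := by
  nth_rewrite 2 [eq_sum_dotProduct_smul_of_orthonormal hcard horth f]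
  simp only [mulVec_sum, dotProduct_sum, mulVec_smul, heig, dotProduct_smul, smul_eq_mul]
  exact Finset.sum_congr rfl fun k _ => by rw [dotProduct_comm f]; ring

theorem dotProduct_self_eq_sum_sq_of_orthonormal (hcard : Fintype.card X = Fintype.card ι)
    (horth : ∀ k l, v k ⬝ᵥ v l = if k = l then 1 else 0) (f : X → ℝ) :
    f ⬝ᵥ f = ∑ k, (v k ⬝ᵥ f) ^ 2 := by
  classical
  simpa using dotProduct_mulVec_eq_sum_mul_sq_of_orthonormal hcard horth
    (A := 1) (P := 1) (fun k => by simp) f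

end Orthonormal

section Indicator

variable {X : Type*} [Fintype X] (Y : Finset X)

theorem dotProduct_indicator_one (u : X → ℝ) :
    u ⬝ᵥ (Y : Set X).indicator 1 = ∑ x ∈ Y, u x := by
  classical
  simp [dotProduct, Set.indicator_apply, Finset.sum_ite_mem]

theorem indicator_one_dotProduct_self :
    (Y : Set X).indicator (1 : X → ℝ) ⬝ᵥ (Y : Set X).indicator 1 = Y.card := by
  rw [dotProduct_indicator_one]
  simp +contextual [Set.indicator_of_mem]

theorem indicator_one_dotProduct_adjMatrix_mulVec_eq_zero (Γ : SimpleGraph X)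
    [DecidableRel Γ.Adj] (hY : ∀ x ∈ Y, ∀ y ∈ Y, ¬Γ.Adj x y) :
    (Y : Set X).indicator (1 : X → ℝ) ⬝ᵥ Γ.adjMatrix ℝ *ᵥ (Y : Set X).indicator 1 = 0 := by
  rw [SimpleGraph.dotProduct_mulVec_adjMatrix]
  refine Finset.sum_eq_zero fun x _ => Finset.sum_eq_zero fun y _ => ?_
  by_cases hx : x ∈ Y <;> by_cases hy : y ∈ Y <;> simp [hx, hy, hY]

end Indicator

theorem le_sum_mul_sq {ι : Type*} [Fintype ι] [DecidableEq ι] (P c : ι → ℝ) {i₀ : ι} {μ : ℝ}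
    (hμ : ∀ k ≠ i₀, μ ≤ P k) :
    P i₀ * c i₀ ^ 2 + μ * (∑ k, c k ^ 2 - c i₀ ^ 2) ≤ ∑ k, P k * c k ^ 2 := by
  rw [← Finset.sum_erase_eq_sub (Finset.mem_univ i₀), Finset.mul_sum,
    ← Finset.add_sum_erase _ _ (Finset.mem_univ i₀)]
  gcongr with k hk
  exact hμ k (Finset.ne_of_mem_erase hk)

theorem div_le_abs_div_add_abs {n m p μ : ℝ} (hn : 0 ≤ n) (hp : 0 < p) (hμ : μ < 0)
    (h : p * (n ^ 2 / m) + μ * (n - n ^ 2 / m) ≤ 0) :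
    n / m ≤ |μ| / (p + |μ|) := by
  rw [abs_of_neg hμ, le_div_iff₀ (by linarith)]
  rcases hn.eq_or_lt with rfl | hnpos
  · simp only [zero_div, zero_mul]
    linarith
  · have hr : n ^ 2 / m = n * (n / m) := by ring
    rw [hr] at h
    nlinarith

theorem hoffman_bound_general (X : Type) [Fintype X] (Γ : SimpleGraph X) [DecidableRel Γ.Adj]
    (m : ℕ) (hm : Fintype.card X = m) (hpos : 0 < m)
    (v : Fin m → (X → ℝ)) (P : Fin m → ℝ)
    (horth : ∀ k l : Fin m, ∑ x : X, v k x * v l x = if k = l then (1 : ℝ) else 0)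
    (hv0 : ∀ x : X, v ⟨0, hpos⟩ x = 1 / Real.sqrt m)
    (heig : ∀ k : Fin m, (Γ.adjMatrix ℝ).mulVec (v k) = P k • v k)
    (hP0 : 0 < P ⟨0, hpos⟩)
    (Pmin : ℝ)
    (hmin1 : ∀ k : Fin m, k ≠ ⟨0, hpos⟩ → Pmin ≤ P k)
    (hminneg : Pmin < 0)
    (Y : Finset X) (hY : ∀ x ∈ Y, ∀ y ∈ Y, ¬Γ.Adj x y) :
    (Y.card : ℝ) / m ≤ |Pmin| / (P ⟨0, hpos⟩ + |Pmin|) := by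
  classical
  set χ : X → ℝ := (Y : Set X).indicator 1
  have hcard : Fintype.card X = Fintype.card (Fin m) := by rw [hm, Fintype.card_fin]
  have hzero : ∑ k, P k * (v k ⬝ᵥ χ) ^ 2 = 0 := by
    rw [← dotProduct_mulVec_eq_sum_mul_sq_of_orthonormal hcard horth heig,
      indicator_one_dotProduct_adjMatrix_mulVec_eq_zero Y Γ hY]
  have hparseval : ∑ k, (v k ⬝ᵥ χ) ^ 2 = Y.card := by
    rw [← dotProduct_self_eq_sum_sq_of_orthonormal hcard horth, indicator_one_dotProduct_self]
  have hc₀ : (v ⟨0, hpos⟩ ⬝ᵥ χ) ^ 2 = (Y.card : ℝ) ^ 2 / m := by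
    rw [dotProduct_indicator_one, Finset.sum_congr rfl fun x _ => hv0 x, Finset.sum_const,
      nsmul_eq_mul, mul_one_div, div_pow, Real.sq_sqrt (Nat.cast_nonneg m)]
  have key := le_sum_mul_sq P (fun k => v k ⬝ᵥ χ) hmin1
  rw [hzero, hparseval, hc₀] at key
  exact div_le_abs_div_add_abs (Nat.cast_nonneg _) hP0 hminneg key

/-- The Hoffman ratio bound: if `A` is the adjacency matrix of a graph `Γ` with
orthonormal eigenbasis `v` whose first vector is the (normalised) all-ones
vector, with eigenvalues `P k`, `P 0 > 0` and minimal nontrivial eigenvalue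
`Pmin < 0`, then any independent set `Y` satisfies
`|Y|/|X| ≤ |Pmin|/(P 0 + |Pmin|)`. -/
theorem hoffman_bound (X : Type) [Fintype X] (Γ : SimpleGraph X) [DecidableRel Γ.Adj]
    (m : ℕ) (hm : Fintype.card X = m) (hpos : 0 < m)
    (v : Fin m → (X → ℝ)) (P : Fin m → ℝ)
    (horth : ∀ k l : Fin m, ∑ x : X, v k x * v l x = if k = l then (1 : ℝ) else 0)
    (hv0 : ∀ x : X, v ⟨0, hpos⟩ x = 1 / Real.sqrt m)
    (heig : ∀ k : Fin m, (Γ.adjMatrix ℝ).mulVec (v k) = P k • v k)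
    (hP0 : 0 < P ⟨0, hpos⟩)
    (Pmin : ℝ)
    (hmin1 : ∀ k : Fin m, k ≠ ⟨0, hpos⟩ → Pmin ≤ P k)
    (hmin2 : ∃ k : Fin m, k ≠ ⟨0, hpos⟩ ∧ P k = Pmin)
    (hminneg : Pmin < 0)
    (Y : Finset X) (hY : ∀ x ∈ Y, ∀ y ∈ Y, ¬Γ.Adj x y) :
    (Y.card : ℝ) / m ≤ |Pmin| / (P ⟨0, hpos⟩ + |Pmin|) :=
  hoffman_bound_general X Γ m hm hpos v P horth hv0 heig hP0 Pmin hmin1 hminneg Y hY
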